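/- The speed formula in the case δ = 0 via the Airy equation: let γ > 0 and let A : [0,∞) → ℝ be a twice continuously differentiable solution of A″(z) = 2γz·A(z) with A(0) = 1/2, such that A is strictly decreasing and A(z) → 0 as z → ∞. Then A(z) = Ai((2γ)^{1/3}z)/(2·Ai(0)) for all z ≥ 0, where Ai is the Airy function, and −A′(0)/(2A(0)) = (Γ(2/3)/Γ(1/3))·(3γ/4)^{1/3}, where Γ is the Gamma function. -/

import Mathlib

/-!
Both `A` and the rescaled Airy function `B z = Ai((2γ)^{1/3} z) / (2 Ai 0)` solve
`u″ = 2γ z u` on `[0, ∞)`, take the value `1/2` at `0` and vanish at infinity. Their difference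
obeys a maximum principle: at a positive interior maximum it would have `D″ = 2γ z D > 0`, which
the second-derivative test forbids. Hence `A = B`, and the speed is
`-(2γ)^{1/3} Ai′(0) / (2 Ai(0))`, evaluated from the known values of `Ai(0)` and `Ai′(0)`.
-/

open Filter Set Topology

theorem IsLocalMax.deriv_deriv_nonpos {f : ℝ → ℝ} {x : ℝ} (hmax : IsLocalMax f x)
    (hc : ContinuousAt f x) : deriv (deriv f) x ≤ 0 := by
  by_contra! hpos
  have hmin := isLocalMin_of_deriv_deriv_pos hpos hmax.deriv_eq_zero hc
  have hconst : f =ᶠ[𝓝 x] fun _ => f x := by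
    filter_upwards [hmax, hmin] with y hyx hxy using le_antisymm hyx hxy
  have hzero : deriv (deriv f) x = 0 := by simpa using hconst.deriv.deriv_eq
  exact hpos.ne' hzero

theorem nonpos_on_Ici_of_deriv_deriv_pos {D : ℝ → ℝ} {a : ℝ}
    (hcont : ContinuousOn D (Ici a)) (ha : D a ≤ 0) (hlim : Tendsto D atTop (𝓝 0))
    (hconvex : ∀ z > a, 0 < D z → 0 < deriv (deriv D) z) :
    ∀ z ≥ a, D z ≤ 0 := by
  by_contra! ⟨z₀, hz₀, hDz₀⟩
  have hfar : ∀ᶠ z in cocompact ℝ ⊓ 𝓟 (Ici a), D z ≤ D z₀ := by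
    rw [cocompact_eq_atBot_atTop, inf_sup_right, eventually_sup]
    refine ⟨eventually_inf_principal.2 ?_,
      ((hlim.eventually_lt_const hDz₀).mono fun _ h => h.le).filter_mono inf_le_left⟩
    filter_upwards [eventually_lt_atBot a] with z hz hz' using absurd hz' (not_le.2 hz)
  obtain ⟨zm, hzm, hmax⟩ := hcont.exists_isMaxOn' isClosed_Ici hz₀ hfar
  have hDzm : 0 < D zm := hDz₀.trans_le (hmax hz₀)
  have hzm_gt : a < zm := lt_of_le_of_ne hzm (by rintro rfl; linarith)
  have hnhds : Ici a ∈ 𝓝 zm := Ici_mem_nhds hzm_gt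
  exact (hconvex zm hzm_gt hDzm).not_ge
    ((hmax.isLocalMax hnhds).deriv_deriv_nonpos (hcont.continuousAt hnhds))

theorem le_on_Ici_of_deriv_deriv_eq_mul {f g q : ℝ → ℝ} {a : ℝ} (hf : ContDiff ℝ 2 f)
    (hg : ContDiff ℝ 2 g) (hq : ∀ z > a, 0 < q z)
    (hf'' : ∀ z > a, deriv (deriv f) z = q z * f z)
    (hg'' : ∀ z > a, deriv (deriv g) z = q z * g z) (ha : f a ≤ g a)
    (hflim : Tendsto f atTop (𝓝 0)) (hglim : Tendsto g atTop (𝓝 0)) :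
    ∀ z ≥ a, f z ≤ g z := by
  have hD' : deriv (f - g) = deriv f - deriv g :=
    funext fun z => deriv_sub (hf.differentiable two_ne_zero z) (hg.differentiable two_ne_zero z)
  have hD'' : ∀ z > a, deriv (deriv (f - g)) z = q z * (f - g) z := by
    intro z hz
    rw [hD', deriv_sub (hf.differentiable_deriv_two z) (hg.differentiable_deriv_two z),
      hf'' z hz, hg'' z hz, Pi.sub_apply, mul_sub]
  intro z hz
  have hlim : Tendsto (f - g) atTop (𝓝 0) := by
    rw [← sub_zero (0:ℝ)]; exact hflim.sub hglim
  refine sub_nonpos.1 (nonpos_on_Ici_of_deriv_deriv_pos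
    (hf.continuous.sub hg.continuous).continuousOn (sub_nonpos.2 ha) hlim
    (fun z hz hpos => ?_) z hz)
  rw [hD'' z hz]
  exact mul_pos (hq z hz) hpos

theorem eqOn_Ici_of_deriv_deriv_eq_mul {f g q : ℝ → ℝ} {a : ℝ} (hf : ContDiff ℝ 2 f)
    (hg : ContDiff ℝ 2 g) (hq : ∀ z > a, 0 < q z)
    (hf'' : ∀ z > a, deriv (deriv f) z = q z * f z)
    (hg'' : ∀ z > a, deriv (deriv g) z = q z * g z) (ha : f a = g a)
    (hflim : Tendsto f atTop (𝓝 0)) (hglim : Tendsto g atTop (𝓝 0)) :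
    EqOn f g (Ici a) := fun z hz =>
  le_antisymm (le_on_Ici_of_deriv_deriv_eq_mul hf hg hq hf'' hg'' ha.le hflim hglim z hz)
    (le_on_Ici_of_deriv_deriv_eq_mul hg hf hq hg'' hf'' ha.ge hglim hflim z hz)

theorem deriv_comp_mul_left_div (f : ℝ → ℝ) (c d x : ℝ) :
    deriv (fun z => f (c * z) / d) x = c * deriv f (c * x) / d := by
  rw [deriv_div_const, deriv_comp_mul_left, smul_eq_mul]

theorem deriv_deriv_comp_mul_left_div (f : ℝ → ℝ) (c d x : ℝ) :
    deriv (deriv fun z => f (c * z) / d) x = c ^ 2 * deriv (deriv f) (c * x) / d := by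
  simp only [funext (deriv_comp_mul_left_div f c d), deriv_div_const, deriv_const_mul_field',
    deriv_comp_mul_left, smul_eq_mul]
  ring

theorem deriv_eq_of_eqOn_Ici {f g : ℝ → ℝ} {a : ℝ} (hf : DifferentiableAt ℝ f a)
    (hg : DifferentiableAt ℝ g a) (h : EqOn f g (Ici a)) : deriv f a = deriv g a := by
  have hu : UniqueDiffWithinAt ℝ (Ici a) a := uniqueDiffOn_Ici a a self_mem_Ici
  rw [← hf.derivWithin hu, ← hg.derivWithin hu, derivWithin_congr h (h self_mem_Ici)]

theorem two_mul_rpow_third_mul_three_rpow_third {γ : ℝ} (hγ : 0 ≤ γ) :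
    (2 * γ) ^ ((1:ℝ) / 3) * 3 ^ ((1:ℝ) / 3) = 2 * (3 * γ / 4) ^ ((1:ℝ) / 3) := by
  have h8 : (8:ℝ) ^ ((1:ℝ) / 3) = 2 := by
    rw [show (8:ℝ) = 2 ^ (3:ℝ) by norm_num, ← Real.rpow_mul (by norm_num)]
    norm_num
  rw [← Real.mul_rpow (by positivity) (by norm_num), show 2 * γ * 3 = 8 * (3 * γ / 4) by ring,
    Real.mul_rpow (by norm_num) (by positivity), h8]

theorem speed_delta_zero_general (γ : ℝ) (hγ : 0 < γ)
    (Ai : ℝ → ℝ) (hAiC2 : ContDiff ℝ 2 Ai)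
    (hAiODE : ∀ z : ℝ, deriv (deriv Ai) z = z * Ai z)
    (hAilim : Tendsto Ai atTop (nhds 0))
    (hAi0 : Ai 0 = 1 / (3 ^ ((2:ℝ)/3) * Real.Gamma (2/3)))
    (hAi'0 : deriv Ai 0 = -(1 / (3 ^ ((1:ℝ)/3) * Real.Gamma (1/3))))
    (A : ℝ → ℝ) (hAC2 : ContDiff ℝ 2 A)
    (hAODE : ∀ z ≥ (0:ℝ), deriv (deriv A) z = 2*γ*z*A z)
    (hA0 : A 0 = 1/2)
    (hAlim : Tendsto A atTop (nhds 0)) :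
    (∀ z ≥ (0:ℝ), A z = Ai ((2*γ) ^ ((1:ℝ)/3) * z) / (2 * Ai 0)) ∧
    -(deriv A 0) / (2 * A 0)
      = (Real.Gamma (2/3) / Real.Gamma (1/3)) * (3*γ/4) ^ ((1:ℝ)/3) := by
  set c := (2*γ) ^ ((1:ℝ)/3) with hc
  have hc3 : c ^ 3 = 2*γ := by
    rw [hc, one_div]
    exact_mod_cast Real.rpow_inv_natCast_pow (by positivity : (0:ℝ) ≤ 2*γ) three_ne_zero
  have hAi0_ne : Ai 0 ≠ 0 := by
    rw [hAi0]; have := Real.Gamma_pos_of_pos (by norm_num : (0:ℝ) < 2/3); positivity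
  set B : ℝ → ℝ := fun z => Ai (c * z) / (2 * Ai 0)
  have hBC2 : ContDiff ℝ 2 B := (hAiC2.comp (contDiff_const.mul contDiff_id)).div_const _
  have hB'' : ∀ z > (0:ℝ), deriv (deriv B) z = 2*γ*z * B z := fun z _ => by
    rw [deriv_deriv_comp_mul_left_div, hAiODE, ← hc3]; ring
  have hB0 : B 0 = 1/2 := by
    simp only [B, mul_zero]; field_simp
  have hBlim : Tendsto B atTop (nhds 0) := by
    simpa [B] using (hAilim.comp (tendsto_id.const_mul_atTop (by positivity : 0 < c))).div_const
      (2 * Ai 0)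
  have hAB : EqOn A B (Ici 0) := eqOn_Ici_of_deriv_deriv_eq_mul hAC2 hBC2
    (fun z hz => by positivity) (fun z hz => hAODE z hz.le) hB'' (hA0.trans hB0.symm) hAlim hBlim
  refine ⟨fun z hz => hAB hz, ?_⟩
  rw [deriv_eq_of_eqOn_Ici (hAC2.differentiable two_ne_zero 0)
    (hBC2.differentiable two_ne_zero 0) hAB, deriv_comp_mul_left_div, mul_zero, hA0, hAi'0, hAi0]
  have h33 : (3:ℝ) ^ ((2:ℝ)/3) = 3 ^ ((1:ℝ)/3) * 3 ^ ((1:ℝ)/3) := by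
    rw [← Real.rpow_add (by norm_num)]; norm_num
  rw [h33]
  field_simp
  exact two_mul_rpow_third_mul_three_rpow_third hγ.le

/-- **The speed formula in the case `δ = 0` via the Airy equation** (Remark 2.6(3) of
the paper). Let `Ai` be the Airy function: the solution of `u″(z) = z·u(z)` on `ℝ`
which is positive on `[0,∞)` and tends to `0` at `+∞`, normalised by
`Ai(0) = 1/(3^{2/3}Γ(2/3))` and `Ai′(0) = −1/(3^{1/3}Γ(1/3))`. If `A : [0,∞) → ℝ` is a
twice continuously differentiable solution of `A″(z) = 2γz·A(z)` with `A(0) = 1/2`,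
`A` strictly decreasing and `A(z) → 0` as `z → ∞`, then
`A(z) = Ai((2γ)^{1/3}z)/(2·Ai(0))` for all `z ≥ 0`, and
`−A′(0)/(2A(0)) = (Γ(2/3)/Γ(1/3))·(3γ/4)^{1/3}`. -/
theorem speed_delta_zero (γ : ℝ) (hγ : 0 < γ)
    (Ai : ℝ → ℝ) (hAiC2 : ContDiff ℝ 2 Ai)
    (hAiODE : ∀ z : ℝ, deriv (deriv Ai) z = z * Ai z)
    (hAipos : ∀ z ≥ (0:ℝ), 0 < Ai z)
    (hAilim : Tendsto Ai atTop (nhds 0))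
    (hAi0 : Ai 0 = 1 / (3 ^ ((2:ℝ)/3) * Real.Gamma (2/3)))
    (hAi'0 : deriv Ai 0 = -(1 / (3 ^ ((1:ℝ)/3) * Real.Gamma (1/3))))
    (A : ℝ → ℝ) (hAC2 : ContDiff ℝ 2 A)
    (hAODE : ∀ z ≥ (0:ℝ), deriv (deriv A) z = 2*γ*z*A z)
    (hA0 : A 0 = 1/2)
    (hAanti : StrictAntiOn A (Ici 0))
    (hAlim : Tendsto A atTop (nhds 0)) :
    (∀ z ≥ (0:ℝ), A z = Ai ((2*γ) ^ ((1:ℝ)/3) * z) / (2 * Ai 0)) ∧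
    -(deriv A 0) / (2 * A 0)
      = (Real.Gamma (2/3) / Real.Gamma (1/3)) * (3*γ/4) ^ ((1:ℝ)/3) :=
  speed_delta_zero_general γ hγ Ai hAiC2 hAiODE hAilim hAi0 hAi'0 A hAC2 hAODE hA0 hAlim
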